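/- For permutations: among all π ∈ S_n, the quantity |π| + |π⁻¹∘τ| is maximized exactly by the non-crossing permutations, where the maximum value is n+1; in particular |π| + |π⁻¹∘τ| ≤ n+1 for all π ∈ S_n. -/

import Mathlib

open Equiv Equiv.Perm Finset
set_option linter.unusedSectionVars false
set_option maxHeartbeats 1000000

/-- The number of cycles of a permutation, counting fixed points as 1-cycles. -/
def cycleCount {n : ℕ} (π : Equiv.Perm (Fin n)) : ℕ :=
  π.cycleType.card + (Finset.univ.filter fun x => π x = x).card

/-- The cycle (orbit) partition of `π` is non-crossing: there are no
`a₁ < b₁ < a₂ < b₂` with `a₁, a₂` in one cycle and `b₁, b₂` in a different cycle. -/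
def HasNonCrossingCycles {n : ℕ} (π : Equiv.Perm (Fin n)) : Prop :=
  ¬ ∃ a₁ b₁ a₂ b₂ : Fin n, a₁ < b₁ ∧ b₁ < a₂ ∧ a₂ < b₂ ∧
      π.SameCycle a₁ a₂ ∧ π.SameCycle b₁ b₂ ∧ ¬ π.SameCycle a₁ b₁

/-- Each cycle of `π` traverses its elements (its block) in increasing cyclic order:
`π x` is the least element of the orbit of `x` strictly above `x` if one exists, and
the least element of the orbit otherwise. -/
def CyclicallyIncreasing {n : ℕ} (π : Equiv.Perm (Fin n)) : Prop :=
  ∀ x : Fin n,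
    ((∃ y, π.SameCycle x y ∧ x < y) →
        x < π x ∧ ∀ y, π.SameCycle x y → x < y → π x ≤ y) ∧
    ((∀ y, π.SameCycle x y → y ≤ x) → ∀ y, π.SameCycle x y → π x ≤ y)

/-- A non-crossing permutation: the permutation obtained from a non-crossing partition
by taking each block in increasing cyclic order. -/
def IsNonCrossingPerm {n : ℕ} (π : Equiv.Perm (Fin n)) : Prop :=
  HasNonCrossingCycles π ∧ CyclicallyIncreasing π

theorem Equiv.Perm.apply_inv_self {α : Type*} (f : Equiv.Perm α) (x : α) : f (f⁻¹ x) = x :=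
  f.apply_symm_apply x

theorem Equiv.Perm.inv_apply_self {α : Type*} (f : Equiv.Perm α) (x : α) : f⁻¹ (f x) = x :=
  f.symm_apply_apply x

namespace NCAux
variable {α : Type*} [Fintype α] [DecidableEq α]

lemma pow_apply_succ (f : Perm α) (k : ℕ) (x : α) :
    (f ^ (k+1)) x = f ((f ^ k) x) := by
  rw [pow_succ', Equiv.Perm.mul_apply]

lemma sameCycle_iff_pow (f : Perm α) {x y : α} :
    f.SameCycle x y ↔ ∃ k : ℕ, (f ^ k) x = y := by
  constructor
  · intro h
    obtain ⟨i, _, hi⟩ := h.exists_pow_eq'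
    exact ⟨i, hi⟩
  · rintro ⟨k, rfl⟩
    exact ⟨(k : ℤ), by simp [zpow_natCast]⟩

lemma sameCycle_of_apply_eq {f : Perm α} {x y : α} (h : f x = y) : f.SameCycle x y :=
  (sameCycle_iff_pow f).2 ⟨1, by simpa using h⟩

lemma not_sameCycle_of_invariant (f : Perm α) (S : Finset α)
    (hS : ∀ x ∈ S, f x ∈ S) {a b : α} (ha : a ∈ S) (hb : b ∉ S) :
    ¬ f.SameCycle a b := by
  intro h
  obtain ⟨k, hk⟩ := (sameCycle_iff_pow f).1 h
  have : ∀ k : ℕ, (f ^ k) a ∈ S := by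
    intro k
    induction k with
    | zero => simpa using ha
    | succ k ih => rw [pow_apply_succ]; exact hS _ ih
  exact hb (hk ▸ this k)

lemma sameCycle_fixed {f : Perm α} {x : α} (h : f x = x) {y : α} :
    f.SameCycle x y ↔ y = x := by
  constructor
  · intro hs
    obtain ⟨k, hk⟩ := (sameCycle_iff_pow f).1 hs
    have : ∀ k : ℕ, (f ^ k) x = x := by
      intro k
      induction k with
      | zero => simp
      | succ k ih => rw [pow_apply_succ, ih, h]
    rw [← hk, this]
  · rintro rfl; exact ⟨0, by simp⟩

lemma swap_mul_apply' (f : Perm α) (a b x : α) :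
    (Equiv.swap a b * f) x = Equiv.swap a b (f x) := rfl

/-- L1 : merging swap connects a and b. -/
lemma sameCycle_swap_mul_self (f : Perm α) {a b : α} (hab : a ≠ b)
    (h : ¬ f.SameCycle a b) : (Equiv.swap a b * f).SameCycle a b := by
  set g := Equiv.swap a b * f with hg
  have hgdef : ∀ x, g x = Equiv.swap a b (f x) := fun _ => rfl
  have hex : ∃ k, 0 < k ∧ (f ^ k) a = a :=
    ⟨orderOf f, orderOf_pos f, by rw [pow_orderOf_eq_one]; rfl⟩
  classical
  obtain ⟨hppos, hpa⟩ := Nat.find_spec hex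
  set p := Nat.find hex with hp
  have hfb : ∀ j : ℕ, (f ^ j) a ≠ b := by
    intro j hj
    exact h ((sameCycle_iff_pow f).2 ⟨j, hj⟩)
  have key : ∀ i < p, (g ^ i) a = (f ^ i) a := by
    intro i hi
    induction i with
    | zero => simp
    | succ i ih =>
      have hi' : i < p := Nat.lt_of_succ_lt hi
      rw [pow_apply_succ, ih hi', hgdef, ← pow_apply_succ]
      have h1 : (f ^ (i+1)) a ≠ a := by
        intro hcon
        exact Nat.find_min hex hi ⟨Nat.succ_pos i, hcon⟩
      exact Equiv.swap_apply_of_ne_of_ne h1 (hfb (i+1))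
  have hgp : (g ^ p) a = b := by
    obtain ⟨q, hq⟩ : ∃ q, p = q + 1 := ⟨p - 1, by omega⟩
    rw [hq, pow_apply_succ, key q (by omega), hgdef, ← pow_apply_succ, ← hq, hpa,
      Equiv.swap_apply_left]
  exact (sameCycle_iff_pow g).2 ⟨p, hgp⟩

/-- L2 : splitting swap disconnects a and b. -/
lemma not_sameCycle_swap_mul_self (f : Perm α) {a b : α} (hab : a ≠ b)
    (h : f.SameCycle a b) : ¬ (Equiv.swap a b * f).SameCycle a b := by
  set g := Equiv.swap a b * f with hg
  have hgdef : ∀ x, g x = Equiv.swap a b (f x) := fun _ => rfl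
  have hex : ∃ k, (f ^ k) a = b := (sameCycle_iff_pow f).1 h
  classical
  have hpa : (f ^ (Nat.find hex)) a = b := Nat.find_spec hex
  set p := Nat.find hex with hp
  have hppos : 0 < p := by
    rcases Nat.eq_zero_or_pos p with h0 | h0
    · exfalso; apply hab; rw [← hpa, h0]; simp
    · exact h0
  have hja : ∀ j, 0 < j → j < p → (f ^ j) a ≠ a := by
    intro j hj0 hjp hcon
    have : (f ^ (p - j)) a = b := by
      have h2 := hpa
      rw [show p = (p - j) + j by omega, pow_add, Equiv.Perm.mul_apply, hcon] at h2
      exact h2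
    exact Nat.find_min hex (show p - j < p by omega) this
  set A : Finset α := (Finset.range p).image (fun i => (f ^ i) a) with hA
  have haA : a ∈ A := Finset.mem_image.2 ⟨0, Finset.mem_range.2 hppos, by simp⟩
  have hbA : b ∉ A := by
    intro hb
    obtain ⟨i, hi, hfi⟩ := Finset.mem_image.1 hb
    exact Nat.find_min hex (Finset.mem_range.1 hi) hfi
  refine not_sameCycle_of_invariant g A ?_ haA hbA
  intro x hx
  obtain ⟨i, hi, rfl⟩ := Finset.mem_image.1 hx
  rw [Finset.mem_range] at hi
  rw [hgdef, ← pow_apply_succ]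
  rcases Nat.lt_or_ge (i+1) p with hip | hip
  · rw [Equiv.swap_apply_of_ne_of_ne (hja (i+1) (Nat.succ_pos i) hip)
      (fun hcon => Nat.find_min hex hip hcon)]
    exact Finset.mem_image.2 ⟨i+1, Finset.mem_range.2 hip, rfl⟩
  · have hipp : i + 1 = p := by omega
    rw [hipp, hpa, Equiv.swap_apply_right]
    exact haA

/-- M : orbit relation for a merging swap. -/
lemma sameCycle_swap_mul_iff (f : Perm α) {a b : α} (hab : a ≠ b)
    (h : ¬ f.SameCycle a b) (x y : α) :
    (Equiv.swap a b * f).SameCycle x y ↔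
      f.SameCycle x y ∨ (f.SameCycle x a ∧ f.SameCycle b y) ∨
        (f.SameCycle x b ∧ f.SameCycle a y) := by
  set g := Equiv.swap a b * f with hg
  have hgdef : ∀ x, g x = Equiv.swap a b (f x) := fun _ => rfl
  have hgab : g.SameCycle a b := sameCycle_swap_mul_self f hab h
  have step : ∀ z : α, g.SameCycle z (f z) := by
    intro z
    rcases eq_or_ne (f z) a with hz | hz
    · have h1 : g z = b := by rw [hgdef, hz, Equiv.swap_apply_left]
      rw [hz]
      exact (sameCycle_of_apply_eq h1).trans hgab.symm
    rcases eq_or_ne (f z) b with hz' | hz'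
    · have h1 : g z = a := by rw [hgdef, hz', Equiv.swap_apply_right]
      rw [hz']
      exact (sameCycle_of_apply_eq h1).trans hgab
    · exact sameCycle_of_apply_eq (by rw [hgdef, Equiv.swap_apply_of_ne_of_ne hz hz'])
  have lift : ∀ u v : α, f.SameCycle u v → g.SameCycle u v := by
    intro u v huv
    obtain ⟨k, hk⟩ := (sameCycle_iff_pow f).1 huv
    subst hk
    clear huv
    induction k with
    | zero => simpa using SameCycle.refl g u
    | succ k ih =>
      rw [pow_apply_succ]
      exact ih.trans (step _)
  constructor
  · intro hxy
    obtain ⟨k, hk⟩ := (sameCycle_iff_pow g).1 hxy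
    subst hk
    clear hxy
    induction k with
    | zero => exact Or.inl (by simpa using SameCycle.refl f x)
    | succ k ih =>
      rw [pow_apply_succ]
      set y := (g ^ k) x with hy
      rcases eq_or_ne (f y) a with hfy | hfy
      · have hgyb : g y = b := by rw [hgdef, hfy, Equiv.swap_apply_left]
        have hya : f.SameCycle y a := sameCycle_of_apply_eq hfy
        rw [hgyb]
        rcases ih with h1 | ⟨h1, h2⟩ | ⟨h1, h2⟩
        · exact Or.inr (Or.inl ⟨h1.trans hya, SameCycle.refl f b⟩)
        · exact absurd (h2.trans hya).symm h
        · exact Or.inl h1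
      rcases eq_or_ne (f y) b with hfy' | hfy'
      · have hgyb : g y = a := by rw [hgdef, hfy', Equiv.swap_apply_right]
        have hyb : f.SameCycle y b := sameCycle_of_apply_eq hfy'
        rw [hgyb]
        rcases ih with h1 | ⟨h1, h2⟩ | ⟨h1, h2⟩
        · exact Or.inr (Or.inr ⟨h1.trans hyb, SameCycle.refl f a⟩)
        · exact Or.inl h1
        · exact absurd (h2.trans hyb) h
      · have hgyy : g y = f y := by rw [hgdef, Equiv.swap_apply_of_ne_of_ne hfy hfy']
        have hyy : f.SameCycle y (f y) := sameCycle_of_apply_eq rfl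
        rw [hgyy]
        rcases ih with h1 | ⟨h1, h2⟩ | ⟨h1, h2⟩
        · exact Or.inl (h1.trans hyy)
        · exact Or.inr (Or.inl ⟨h1, h2.trans hyy⟩)
        · exact Or.inr (Or.inr ⟨h1, h2.trans hyy⟩)
  · rintro (h1 | ⟨h1, h2⟩ | ⟨h1, h2⟩)
    · exact lift _ _ h1
    · exact ((lift _ _ h1).trans hgab).trans (lift _ _ h2)
    · exact ((lift _ _ h1).trans hgab.symm).trans (lift _ _ h2)

def orb (f : Perm α) (x : α) : Finset α := univ.filter (fun y => f.SameCycle x y)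

def orbCount (f : Perm α) : ℕ := (univ.image (orb f)).card

@[simp] lemma mem_orb {f : Perm α} {x y : α} : y ∈ orb f x ↔ f.SameCycle x y := by
  simp [orb]

lemma self_mem_orb (f : Perm α) (x : α) : x ∈ orb f x := mem_orb.2 (Equiv.Perm.SameCycle.refl f x)

lemma orb_eq_of_sameCycle {f : Perm α} {x y : α} (h : f.SameCycle x y) :
    orb f x = orb f y := by
  ext z; simp only [mem_orb]
  exact ⟨fun hz => h.symm.trans hz, fun hz => h.trans hz⟩

lemma orb_inv (f : Perm α) (x : α) : orb f⁻¹ x = orb f x := by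
  ext z; simp [Equiv.Perm.sameCycle_inv]

lemma orbCount_inv (f : Perm α) : orbCount f⁻¹ = orbCount f := by
  unfold orbCount
  congr 1
  apply Finset.image_congr
  intro x _
  exact orb_inv f x

lemma cycleCount_eq_orbCount (f : Perm α) :
    f.cycleType.card + (univ.filter fun x => f x = x).card = orbCount f := by
  classical
  have hfix : ∀ x, f x = x → orb f x = {x} := by
    intro x hx
    ext y
    simp [sameCycle_fixed hx]
  have hsup : ∀ x ∈ f.support, orb f x = (f.cycleOf x).support := by
    intro x hx
    ext y
    simp only [mem_orb, Equiv.Perm.mem_support_cycleOf_iff]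
    exact ⟨fun h => ⟨h, hx⟩, fun h => h.1⟩
  -- image over support equals image of factors under support
  have himg : f.support.image (orb f) = f.cycleFactorsFinset.image Equiv.Perm.support := by
    ext s
    simp only [Finset.mem_image]
    constructor
    · rintro ⟨x, hx, rfl⟩
      exact ⟨f.cycleOf x, Equiv.Perm.cycleOf_mem_cycleFactorsFinset_iff.2 hx, (hsup x hx).symm⟩
    · rintro ⟨c, hc, rfl⟩
      have hcyc := (Equiv.Perm.mem_cycleFactorsFinset_iff.1 hc).1
      obtain ⟨a, ha⟩ := hcyc.nonempty_support
      have hca : c = f.cycleOf a := Equiv.Perm.cycle_is_cycleOf ha hc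
      have haf : a ∈ f.support := by
        rw [Equiv.Perm.mem_support]
        have := (Equiv.Perm.mem_cycleFactorsFinset_iff.1 hc).2 a ha
        rw [← this]
        exact Equiv.Perm.mem_support.1 ha
      exact ⟨a, haf, by rw [hsup a haf, hca]⟩
  have hcardfac : (f.cycleFactorsFinset.image Equiv.Perm.support).card
      = f.cycleFactorsFinset.card := by
    apply Finset.card_image_of_injOn
    intro c₁ h₁' c₂ h₂' hs
    have h₁ : c₁ ∈ f.cycleFactorsFinset := h₁'
    have h₂ : c₂ ∈ f.cycleFactorsFinset := h₂'
    have hcyc₁ := (Equiv.Perm.mem_cycleFactorsFinset_iff.1 h₁).1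
    obtain ⟨a, ha⟩ := hcyc₁.nonempty_support
    have ha₂ : a ∈ c₂.support := by rw [← hs]; exact ha
    rw [Equiv.Perm.cycle_is_cycleOf ha h₁, Equiv.Perm.cycle_is_cycleOf ha₂ h₂]
  have hctc : f.cycleType.card = f.cycleFactorsFinset.card := by
    rw [Equiv.Perm.cycleType_def, Multiset.card_map]
    rfl
  -- split univ image
  have hsplit : univ.image (orb f) =
      (f.support.image (orb f)) ∪ ((univ.filter fun x => f x = x).image (orb f)) := by
    ext s
    constructor
    · intro hs
      obtain ⟨x, -, rfl⟩ := Finset.mem_image.1 hs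
      rcases eq_or_ne (f x) x with hx | hx
      · exact Finset.mem_union_right _ (Finset.mem_image.2
          ⟨x, Finset.mem_filter.2 ⟨Finset.mem_univ x, hx⟩, rfl⟩)
      · exact Finset.mem_union_left _ (Finset.mem_image.2
          ⟨x, Equiv.Perm.mem_support.2 hx, rfl⟩)
    · intro hs
      rcases Finset.mem_union.1 hs with h | h <;>
        · obtain ⟨x, -, rfl⟩ := Finset.mem_image.1 h
          exact Finset.mem_image.2 ⟨x, Finset.mem_univ x, rfl⟩
  have hdisj : Disjoint (f.support.image (orb f))
      ((univ.filter fun x => f x = x).image (orb f)) := by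
    rw [Finset.disjoint_left]
    rintro s hs ht
    obtain ⟨x, hx, rfl⟩ := Finset.mem_image.1 hs
    obtain ⟨y, hy, hxy⟩ := Finset.mem_image.1 ht
    rw [Finset.mem_filter] at hy
    rw [hfix y hy.2] at hxy
    have h1 : x ∈ orb f x := self_mem_orb f x
    have h2 : f x ∈ orb f x := mem_orb.2 (sameCycle_of_apply_eq rfl)
    rw [← hxy] at h1 h2
    simp only [Finset.mem_singleton] at h1 h2
    exact (Equiv.Perm.mem_support.1 hx) (by rw [h2, h1])
  have hfixcard : ((univ.filter fun x => f x = x).image (orb f)).card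
      = (univ.filter fun x => f x = x).card := by
    apply Finset.card_image_of_injOn
    intro x hx' y hy' hxy
    have hx : x ∈ univ.filter fun x => f x = x := hx'
    have hy : y ∈ univ.filter fun x => f x = x := hy'
    rw [Finset.mem_filter] at hx hy
    rw [hfix x hx.2, hfix y hy.2] at hxy
    simpa using hxy
  unfold orbCount
  rw [hsplit, Finset.card_union_of_disjoint hdisj, himg, hcardfac, hfixcard, hctc]


lemma orbCount_merge (f : Perm α) {a b : α} (hab : a ≠ b) (h : ¬ f.SameCycle a b) :
    orbCount (Equiv.swap a b * f) + 1 = orbCount f := by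
  classical
  set g := Equiv.swap a b * f with hg
  have hM := sameCycle_swap_mul_iff f hab h
  set U : Finset α := univ.filter (fun x => ¬ f.SameCycle a x ∧ ¬ f.SameCycle b x) with hU
  have hUmem : ∀ x, x ∈ U ↔ (¬ f.SameCycle a x ∧ ¬ f.SameCycle b x) := by
    intro x; simp [hU]
  have hU1 : ∀ x ∈ U, orb g x = orb f x := by
    intro x hx
    rw [hUmem] at hx
    ext y
    simp only [mem_orb]
    rw [hM x y]
    constructor
    · rintro (h1 | ⟨h1, h2⟩ | ⟨h1, h2⟩)
      · exact h1
      · exact absurd h1.symm hx.1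
      · exact absurd h1.symm hx.2
    · exact fun h1 => Or.inl h1
  have horbg : ∀ x, (f.SameCycle a x ∨ f.SameCycle b x) → orb g x = orb g a := by
    intro x hx
    apply orb_eq_of_sameCycle
    rcases hx with hx | hx
    · exact ((hM a x).2 (Or.inl hx)).symm
    · exact ((hM a x).2 (Or.inr (Or.inl ⟨SameCycle.refl f a, hx⟩))).symm
  have himgf : univ.image (orb f) = U.image (orb f) ∪ {orb f a, orb f b} := by
    ext s
    constructor
    · intro hs
      obtain ⟨x, -, rfl⟩ := Finset.mem_image.1 hs
      by_cases hxa : f.SameCycle a x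
      · exact Finset.mem_union_right _ (by
          simp [orb_eq_of_sameCycle hxa.symm])
      by_cases hxb : f.SameCycle b x
      · exact Finset.mem_union_right _ (by
          simp [orb_eq_of_sameCycle hxb.symm])
      · exact Finset.mem_union_left _
          (Finset.mem_image.2 ⟨x, (hUmem x).2 ⟨hxa, hxb⟩, rfl⟩)
    · intro hs
      rcases Finset.mem_union.1 hs with h1 | h1
      · obtain ⟨x, -, rfl⟩ := Finset.mem_image.1 h1
        exact Finset.mem_image.2 ⟨x, Finset.mem_univ x, rfl⟩
      · simp only [Finset.mem_insert, Finset.mem_singleton] at h1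
        rcases h1 with rfl | rfl <;> exact Finset.mem_image.2 ⟨_, Finset.mem_univ _, rfl⟩
  have himgg : univ.image (orb g) = U.image (orb f) ∪ {orb g a} := by
    ext s
    constructor
    · intro hs
      obtain ⟨x, -, rfl⟩ := Finset.mem_image.1 hs
      by_cases hxa : f.SameCycle a x ∨ f.SameCycle b x
      · rw [horbg x hxa]; simp
      push_neg at hxa
      · exact Finset.mem_union_left _
          (Finset.mem_image.2 ⟨x, (hUmem x).2 ⟨hxa.1, hxa.2⟩, by
            rw [hU1 x ((hUmem x).2 ⟨hxa.1, hxa.2⟩)]⟩)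
    · intro hs
      rcases Finset.mem_union.1 hs with h1 | h1
      · obtain ⟨x, hx, rfl⟩ := Finset.mem_image.1 h1
        exact Finset.mem_image.2 ⟨x, Finset.mem_univ x, hU1 x hx⟩
      · simp only [Finset.mem_singleton] at h1
        subst h1
        exact Finset.mem_image.2 ⟨a, Finset.mem_univ a, rfl⟩
  have hfa_notin : orb f a ∉ U.image (orb f) := by
    intro hcon
    obtain ⟨x, hx, hxe⟩ := Finset.mem_image.1 hcon
    rw [hUmem] at hx
    have : a ∈ orb f x := by rw [hxe]; exact self_mem_orb f a
    exact hx.1 ((mem_orb.1 this).symm)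
  have hfb_notin : orb f b ∉ U.image (orb f) := by
    intro hcon
    obtain ⟨x, hx, hxe⟩ := Finset.mem_image.1 hcon
    rw [hUmem] at hx
    have : b ∈ orb f x := by rw [hxe]; exact self_mem_orb f b
    exact hx.2 ((mem_orb.1 this).symm)
  have hga_notin : orb g a ∉ U.image (orb f) := by
    intro hcon
    obtain ⟨x, hx, hxe⟩ := Finset.mem_image.1 hcon
    rw [hUmem] at hx
    have : a ∈ orb f x := by rw [hxe]; exact self_mem_orb g a
    exact hx.1 ((mem_orb.1 this).symm)
  have hab' : orb f a ≠ orb f b := by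
    intro hcon
    have : b ∈ orb f a := by rw [hcon]; exact self_mem_orb f b
    exact h (mem_orb.1 this)
  have hcf : orbCount f = (U.image (orb f)).card + 2 := by
    unfold orbCount
    rw [himgf, Finset.card_union_of_disjoint, Finset.card_insert_of_notMem (by
      simpa using hab'), Finset.card_singleton]
    rw [Finset.disjoint_left]
    intro s hs hs2
    simp only [Finset.mem_insert, Finset.mem_singleton] at hs2
    rcases hs2 with rfl | rfl
    · exact hfa_notin hs
    · exact hfb_notin hs
  have hcg : orbCount g = (U.image (orb f)).card + 1 := by
    unfold orbCount
    rw [himgg, Finset.card_union_of_disjoint, Finset.card_singleton]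
    rw [Finset.disjoint_left]
    intro s hs hs2
    simp only [Finset.mem_singleton] at hs2
    subst hs2
    exact hga_notin hs
  rw [hcg, hcf]

lemma orbCount_split (f : Perm α) {a b : α} (hab : a ≠ b) (h : f.SameCycle a b) :
    orbCount (Equiv.swap a b * f) = orbCount f + 1 := by
  set g := Equiv.swap a b * f with hg
  have h2 : ¬ g.SameCycle a b := not_sameCycle_swap_mul_self f hab h
  have h3 : Equiv.swap a b * g = f := by
    rw [hg, ← mul_assoc, Equiv.swap_mul_self, one_mul]
  have := orbCount_merge g hab h2
  rw [h3] at this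
  omega

lemma orbCount_mul_swap_split (f : Perm α) {a b : α} (hab : a ≠ b) (h : f.SameCycle a b) :
    orbCount (f * Equiv.swap a b) = orbCount f + 1 := by
  have key : f * Equiv.swap a b = (Equiv.swap a b * f⁻¹)⁻¹ := by
    rw [mul_inv_rev, inv_inv, Equiv.swap_inv]
  rw [key, orbCount_inv, orbCount_split f⁻¹ hab (Equiv.Perm.sameCycle_inv.2 h), orbCount_inv]


/-! ### Restriction of a permutation fixing the top element -/

lemma apply_castSucc_ne_last {m : ℕ} (ρ : Perm (Fin (m+1)))
    (hρ : ρ (Fin.last m) = Fin.last m) (x : Fin m) :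
    ρ x.castSucc ≠ Fin.last m := by
  intro hc
  have : ρ x.castSucc = ρ (Fin.last m) := by rw [hc, hρ]
  have := ρ.injective this
  exact absurd this (Fin.ne_of_lt (Fin.castSucc_lt_last x))

def resPerm {m : ℕ} (ρ : Perm (Fin (m+1))) (hρ : ρ (Fin.last m) = Fin.last m) :
    Perm (Fin m) where
  toFun x := (ρ x.castSucc).castPred (apply_castSucc_ne_last ρ hρ x)
  invFun x := (ρ⁻¹ x.castSucc).castPred (by
    intro hc
    have h2 : x.castSucc = ρ (Fin.last m) := by
      rw [← hc]; simp
    rw [hρ] at h2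
    exact absurd h2 (Fin.ne_of_lt (Fin.castSucc_lt_last x)))
  left_inv := by
    intro x
    apply Fin.castSucc_injective
    rw [Fin.castSucc_castPred, Fin.castSucc_castPred]
    simp
  right_inv := by
    intro x
    apply Fin.castSucc_injective
    rw [Fin.castSucc_castPred, Fin.castSucc_castPred]
    simp

lemma castSucc_resPerm {m : ℕ} (ρ : Perm (Fin (m+1)))
    (hρ : ρ (Fin.last m) = Fin.last m) (x : Fin m) :
    ((resPerm ρ hρ) x).castSucc = ρ x.castSucc := by
  simp [resPerm, Fin.castSucc_castPred]

lemma castSucc_resPerm_inv {m : ℕ} (ρ : Perm (Fin (m+1)))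
    (hρ : ρ (Fin.last m) = Fin.last m) (x : Fin m) :
    ((resPerm ρ hρ)⁻¹ x).castSucc = ρ⁻¹ x.castSucc := by
  apply ρ.injective
  rw [Equiv.Perm.apply_inv_self]
  rw [← castSucc_resPerm ρ hρ]
  rw [Equiv.Perm.apply_inv_self]

lemma resPerm_pow {m : ℕ} (ρ : Perm (Fin (m+1)))
    (hρ : ρ (Fin.last m) = Fin.last m) (k : ℕ) (x : Fin m) :
    (((resPerm ρ hρ) ^ k) x).castSucc = (ρ ^ k) x.castSucc := by
  induction k with
  | zero => simp
  | succ k ih => rw [pow_apply_succ, pow_apply_succ, ← ih, castSucc_resPerm]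

lemma sameCycle_resPerm {m : ℕ} (ρ : Perm (Fin (m+1)))
    (hρ : ρ (Fin.last m) = Fin.last m) (x y : Fin m) :
    (resPerm ρ hρ).SameCycle x y ↔ ρ.SameCycle x.castSucc y.castSucc := by
  rw [sameCycle_iff_pow, sameCycle_iff_pow]
  constructor
  · rintro ⟨k, rfl⟩
    exact ⟨k, (resPerm_pow ρ hρ k x).symm⟩
  · rintro ⟨k, hk⟩
    exact ⟨k, Fin.castSucc_injective m (by rw [resPerm_pow ρ hρ k x, hk])⟩

lemma univ_fin_succ_decomp {m : ℕ} :
    (univ : Finset (Fin (m+1))) = insert (Fin.last m) (univ.image Fin.castSucc) := by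
  ext y
  simp only [Finset.mem_univ, true_iff, Finset.mem_insert, Finset.mem_image]
  rcases eq_or_ne y (Fin.last m) with rfl | hy
  · exact Or.inl rfl
  · exact Or.inr ⟨y.castPred hy, ⟨trivial, Fin.castSucc_castPred y hy⟩⟩

lemma orbCount_resPerm {m : ℕ} (ρ : Perm (Fin (m+1)))
    (hρ : ρ (Fin.last m) = Fin.last m) :
    orbCount ρ = orbCount (resPerm ρ hρ) + 1 := by
  classical
  set ρ' := resPerm ρ hρ with hρ'
  have horb_last : orb ρ (Fin.last m) = {Fin.last m} := by
    ext y; simp [sameCycle_fixed hρ]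
  have horb : ∀ x : Fin m, orb ρ x.castSucc = (orb ρ' x).image Fin.castSucc := by
    intro x
    ext y
    simp only [mem_orb, Finset.mem_image]
    rcases eq_or_ne y (Fin.last m) with rfl | hy
    · constructor
      · intro hc
        exact absurd ((sameCycle_fixed hρ).1 hc.symm)
          (Fin.ne_of_lt (Fin.castSucc_lt_last x))
      · rintro ⟨z, hz, hze⟩
        exact absurd hze (Fin.ne_of_lt (Fin.castSucc_lt_last z))
    · rw [← Fin.castSucc_castPred y hy]
      constructor
      · intro hc
        exact ⟨y.castPred hy, (sameCycle_resPerm ρ hρ _ _).2 hc, rfl⟩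
      · rintro ⟨z, hz, hze⟩
        have := Fin.castSucc_injective m hze
        subst this
        exact (sameCycle_resPerm ρ hρ _ _).1 hz
  have himg : univ.image (orb ρ) =
      insert ({Fin.last m} : Finset (Fin (m+1)))
        ((univ.image (orb ρ')).image (fun s => s.image Fin.castSucc)) := by
    conv_lhs => rw [univ_fin_succ_decomp]
    rw [Finset.image_insert, horb_last, Finset.image_image, Finset.image_image]
    congr 1
    apply Finset.image_congr
    intro x _
    exact horb x
  have hnotin : ({Fin.last m} : Finset (Fin (m+1))) ∉
      (univ.image (orb ρ')).image (fun s => s.image Fin.castSucc) := by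
    intro hc
    obtain ⟨s, hs, hse⟩ := Finset.mem_image.1 hc
    obtain ⟨x, -, rfl⟩ := Finset.mem_image.1 hs
    have : x.castSucc ∈ (orb ρ' x).image Fin.castSucc :=
      Finset.mem_image.2 ⟨x, self_mem_orb ρ' x, rfl⟩
    rw [hse] at this
    simp only [Finset.mem_singleton] at this
    exact absurd this (Fin.ne_of_lt (Fin.castSucc_lt_last x))
  have hinj : ((univ.image (orb ρ')).image (fun s => s.image Fin.castSucc)).card
      = (univ.image (orb ρ')).card :=
    Finset.card_image_of_injective _
      (Finset.image_injective (Fin.castSucc_injective m))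
  unfold orbCount
  rw [himg, Finset.card_insert_of_notMem hnotin, hinj]

end NCAux

section Main
open NCAux

lemma fin_lt_last_of_ne {m : ℕ} {x : Fin (m+1)} (h : x ≠ Fin.last m) : x < Fin.last m :=
  lt_of_le_of_ne (Fin.le_last x) h

lemma tau_val {m : ℕ} {x : Fin (m+1)} (h : x ≠ Fin.last m) :
    ((finRotate (m+1)) x).val = x.val + 1 := by
  rw [finRotate_succ_apply, Fin.val_add_one]
  simp [h]

/-- Structure of the cycle containing the top element of a noncrossing permutation. -/
lemma top_facts {m : ℕ} {π : Equiv.Perm (Fin (m+1))} (hCI : CyclicallyIncreasing π) :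
    (∀ y, π.SameCycle (Fin.last m) y → π (Fin.last m) ≤ y) ∧
    (∀ z, π.SameCycle (π⁻¹ (Fin.last m)) z →
      ¬ (π⁻¹ (Fin.last m) < z ∧ z < Fin.last m)) := by
  constructor
  · exact (hCI (Fin.last m)).2 (fun y _ => Fin.le_last y)
  · rintro z hz ⟨h1, h2⟩
    have hcl := (hCI (π⁻¹ (Fin.last m))).1 ⟨z, hz, h1⟩
    have := hcl.2 z hz h1
    rw [Equiv.Perm.apply_inv_self] at this
    exact absurd h2 (not_lt.2 this)

/-- The interval `[a₀, b₀)` is invariant under `ρ⁻¹ ∘ τ` when the cycle of `a₀`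
has no elements strictly inside `(a₀, b₀)` and `ρ` is noncrossing. -/
lemma sigma_invariant {m : ℕ} {ρ : Equiv.Perm (Fin (m+1))}
    (hNC : HasNonCrossingCycles ρ) (hCI : CyclicallyIncreasing ρ)
    {a₀ b₀ : Fin (m+1)} (hab : a₀ < b₀) (hsc : ρ.SameCycle a₀ b₀)
    (hgap : ∀ z, ρ.SameCycle a₀ z → ¬(a₀ < z ∧ z < b₀)) :
    ∀ x : Fin (m+1), a₀ ≤ x → x < b₀ →
      a₀ ≤ (ρ⁻¹ * finRotate (m+1)) x ∧ (ρ⁻¹ * finRotate (m+1)) x < b₀ := by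
  intro x hax hxb
  have hxlast : x ≠ Fin.last m := by
    intro h
    exact absurd (lt_of_lt_of_le (h ▸ hxb) (Fin.le_last b₀)) (lt_irrefl _)
  have hτ : ((finRotate (m+1)) x).val = x.val + 1 := tau_val hxlast
  set w := (finRotate (m+1)) x with hw
  have hw1 : a₀ < w := by
    rw [Fin.lt_def, hτ]; have := Fin.le_def.1 hax; omega
  have hw2 : w ≤ b₀ := by
    rw [Fin.le_def, hτ]; have := Fin.lt_def.1 hxb; omega
  have happ : (ρ⁻¹ * finRotate (m+1)) x = ρ⁻¹ w := rfl
  rw [happ]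
  set y := ρ⁻¹ w with hy
  have hρy : ρ y = w := ρ.apply_inv_self w
  have hyw : ρ.SameCycle y w := sameCycle_of_apply_eq hρy
  rcases eq_or_lt_of_le hw2 with hwb | hwb
  · -- w = b₀ : y is the predecessor of b₀ in the cycle of a₀
    have hya : ρ.SameCycle a₀ y := hsc.trans (hwb ▸ hyw).symm
    by_cases hup : ∃ z, ρ.SameCycle y z ∧ y < z
    · obtain ⟨h1, h2⟩ := (hCI y).1 hup
      constructor
      · by_contra hlt
        push_neg at hlt
        have := h2 a₀ hya.symm hlt
        rw [hρy, hwb] at this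
        exact absurd hab (not_lt.2 this)
      · rw [← hwb, ← hρy]; exact h1
    · push_neg at hup
      have h2 := (hCI y).2 hup
      have := h2 a₀ hya.symm
      rw [hρy, hwb] at this
      exact absurd hab (not_lt.2 this)
  · -- a₀ < w < b₀
    have hE : ¬ ρ.SameCycle a₀ y := by
      intro hya
      exact hgap w (hya.trans hyw) ⟨hw1, hwb⟩
    constructor
    · by_contra hlt
      push_neg at hlt
      exact hNC ⟨y, a₀, w, b₀, hlt, hw1, hwb, hyw, hsc, fun h => hE h.symm⟩
    · have hyb : y ≠ b₀ := by
        intro h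
        exact hE (h ▸ hsc : ρ.SameCycle a₀ y).symm.symm
      by_contra hlt
      push_neg at hlt
      have hby : b₀ < y := lt_of_le_of_ne hlt (fun h => hyb h.symm)
      refine hNC ⟨a₀, w, b₀, y, hw1, hwb, hby, hsc, hyw.symm, ?_⟩
      intro h
      exact hgap w h ⟨hw1, hwb⟩

/-- Case A counting : if `π` fixes the top element, the sum for `π` is the sum
for the restriction plus one. -/
lemma caseA_key {l : ℕ} (π : Equiv.Perm (Fin (l+2)))
    (hπ : π (Fin.last (l+1)) = Fin.last (l+1)) :
    orbCount π + orbCount (π⁻¹ * finRotate (l+2)) =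
      (orbCount (resPerm π hπ) + orbCount ((resPerm π hπ)⁻¹ * finRotate (l+1))) + 1 := by
  classical
  set m := l + 1
  set t : Fin (m+1) := Fin.last m with hts
  set π' := resPerm π hπ with hπ'
  set σ : Equiv.Perm (Fin (m+1)) := π⁻¹ * finRotate (m+1) with hσ
  set d : Fin (m+1) := (Fin.last l).castSucc with hd
  have hdt : d ≠ t := Fin.ne_of_lt (Fin.castSucc_lt_last _)
  have hπinvt : π⁻¹ t = t := by
    apply π.injective; rw [Equiv.Perm.apply_inv_self, hπ]
  have hσd : σ d = t := by
    have hτd : (finRotate (m+1)) d = t := by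
      apply Fin.ext
      rw [tau_val hdt]
      simp [hd, hts, Fin.last]
      rfl
    show π⁻¹ ((finRotate (m+1)) d) = t
    rw [hτd, hπinvt]
  set σ₂ := σ * Equiv.swap d t with hσ₂
  have h2 : orbCount σ₂ = orbCount σ + 1 :=
    orbCount_mul_swap_split σ hdt (sameCycle_of_apply_eq hσd)
  have h3 : σ₂ t = t := by
    show σ (Equiv.swap d t t) = t
    rw [Equiv.swap_apply_right, hσd]
  have h4 : resPerm σ₂ h3 = π'⁻¹ * finRotate m := by
    apply Equiv.ext
    intro x
    apply Fin.castSucc_injective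
    rw [castSucc_resPerm]
    rcases eq_or_ne x (Fin.last l) with rfl | hx
    · -- x = last l : castSucc x = d
      have : σ₂ d = π⁻¹ 0 := by
        show σ (Equiv.swap d t d) = π⁻¹ 0
        rw [Equiv.swap_apply_left]
        show π⁻¹ ((finRotate (m+1)) t) = π⁻¹ 0
        rw [finRotate_last]
      rw [show (Fin.last l).castSucc = d from rfl, this]
      have hrhs : ((π'⁻¹ * finRotate m) (Fin.last l)).castSucc
          = π⁻¹ ((finRotate m (Fin.last l)).castSucc) := by
        show ((π'⁻¹ (finRotate m (Fin.last l)))).castSucc = _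
        rw [castSucc_resPerm_inv]
      rw [hrhs, finRotate_last]
      have h0 : ((0 : Fin m)).castSucc = (0 : Fin (m+1)) := by
        apply Fin.ext; simp
      rw [h0]
    · -- x ≠ last l
      have hcx : x.castSucc ≠ d := by
        intro h
        exact hx (Fin.castSucc_injective _ h)
      have hcxt : x.castSucc ≠ t := Fin.ne_of_lt (Fin.castSucc_lt_last _)
      have hstep : σ₂ x.castSucc = σ x.castSucc := by
        show σ (Equiv.swap d t x.castSucc) = σ x.castSucc
        rw [Equiv.swap_apply_of_ne_of_ne hcx hcxt]
      have hτ : (finRotate (m+1)) x.castSucc = (finRotate m x).castSucc := by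
        apply Fin.ext
        rw [tau_val hcxt]
        show x.val + 1 = (finRotate m x).val
        rw [tau_val hx]
      rw [hstep]
      show π⁻¹ ((finRotate (m+1)) x.castSucc) = _
      rw [hτ]
      have hrhs : ((π'⁻¹ * finRotate m) x).castSucc
          = π⁻¹ ((finRotate m x).castSucc) := by
        show ((π'⁻¹ (finRotate m x))).castSucc = _
        rw [castSucc_resPerm_inv]
      rw [hrhs]
  have h5 : orbCount σ₂ = orbCount (π'⁻¹ * finRotate m) + 1 := by
    rw [orbCount_resPerm σ₂ h3, h4]
  have h1 : orbCount π = orbCount π' + 1 := orbCount_resPerm π hπ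
  have h6 : orbCount (π'⁻¹ * finRotate m) = orbCount (π'⁻¹ * finRotate (l+1)) := rfl
  omega

/-- Case A : noncrossing transfers through restriction. -/
lemma caseA_NC {m : ℕ} (π : Equiv.Perm (Fin (m+1)))
    (hπ : π (Fin.last m) = Fin.last m) :
    IsNonCrossingPerm π ↔ IsNonCrossingPerm (resPerm π hπ) := by
  set π' := resPerm π hπ with hπ'
  have hsc : ∀ x y : Fin m, π'.SameCycle x y ↔ π.SameCycle x.castSucc y.castSucc :=
    sameCycle_resPerm π hπ
  have hlast : ∀ y, π.SameCycle (Fin.last m) y ↔ y = Fin.last m :=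
    fun y => sameCycle_fixed hπ
  have hval : ∀ x : Fin m, (π' x).castSucc = π x.castSucc := castSucc_resPerm π hπ
  have hnl : ∀ {x : Fin m} {y : Fin (m+1)}, π.SameCycle x.castSucc y → y ≠ Fin.last m := by
    intro x y h hy
    subst hy
    exact absurd ((hlast _).1 h.symm) (Fin.ne_of_lt (Fin.castSucc_lt_last x))
  constructor
  · rintro ⟨hNC, hCI⟩
    constructor
    · rintro ⟨a₁, b₁, a₂, b₂, h1, h2, h3, h4, h5, h6⟩
      exact hNC ⟨a₁.castSucc, b₁.castSucc, a₂.castSucc, b₂.castSucc,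
        Fin.castSucc_lt_castSucc_iff.2 h1, Fin.castSucc_lt_castSucc_iff.2 h2,
        Fin.castSucc_lt_castSucc_iff.2 h3, (hsc _ _).1 h4, (hsc _ _).1 h5,
        fun h => h6 ((hsc _ _).2 h)⟩
    · intro x
      constructor
      · rintro ⟨y, hy, hxy⟩
        have hc := (hCI x.castSucc).1
          ⟨y.castSucc, (hsc _ _).1 hy, Fin.castSucc_lt_castSucc_iff.2 hxy⟩
        constructor
        · have h9 := hc.1
          rw [← hval] at h9
          exact Fin.castSucc_lt_castSucc_iff.1 h9
        · intro z hz hxz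
          have h9 := hc.2 z.castSucc ((hsc _ _).1 hz) (Fin.castSucc_lt_castSucc_iff.2 hxz)
          rw [← hval] at h9
          exact Fin.castSucc_le_castSucc_iff.1 h9
      · intro hall y hy
        have hall' : ∀ z, π.SameCycle x.castSucc z → z ≤ x.castSucc := by
          intro z hz
          have hzn : z ≠ Fin.last m := hnl hz
          rw [← Fin.castSucc_castPred z hzn] at hz ⊢
          exact Fin.castSucc_le_castSucc_iff.2 (hall _ ((hsc _ _).2 hz))
        have h9 := (hCI x.castSucc).2 hall' y.castSucc ((hsc _ _).1 hy)
        rw [← hval] at h9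
        exact Fin.castSucc_le_castSucc_iff.1 h9
  · rintro ⟨hNC, hCI⟩
    constructor
    · rintro ⟨a₁, b₁, a₂, b₂, h1, h2, h3, h4, h5, h6⟩
      have hb₂l : b₂ ≠ Fin.last m := by
        intro h
        subst h
        have := (hlast b₁).1 h5.symm
        subst this
        exact absurd (h2.trans h3) (lt_irrefl _)
      have ha₂l : a₂ ≠ Fin.last m :=
        Fin.ne_of_lt (h3.trans_le (Fin.le_last b₂))
      have hb₁l : b₁ ≠ Fin.last m :=
        Fin.ne_of_lt ((h2.trans h3).trans_le (Fin.le_last b₂))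
      have ha₁l : a₁ ≠ Fin.last m :=
        Fin.ne_of_lt (((h1.trans h2).trans h3).trans_le (Fin.le_last b₂))
      refine hNC ⟨a₁.castPred ha₁l, b₁.castPred hb₁l, a₂.castPred ha₂l, b₂.castPred hb₂l,
        ?_, ?_, ?_, ?_, ?_, ?_⟩
      · exact Fin.castSucc_lt_castSucc_iff.1
          (by rw [Fin.castSucc_castPred, Fin.castSucc_castPred]; exact h1)
      · exact Fin.castSucc_lt_castSucc_iff.1
          (by rw [Fin.castSucc_castPred, Fin.castSucc_castPred]; exact h2)
      · exact Fin.castSucc_lt_castSucc_iff.1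
          (by rw [Fin.castSucc_castPred, Fin.castSucc_castPred]; exact h3)
      · exact (hsc _ _).2
          (by rw [Fin.castSucc_castPred, Fin.castSucc_castPred]; exact h4)
      · exact (hsc _ _).2
          (by rw [Fin.castSucc_castPred, Fin.castSucc_castPred]; exact h5)
      · intro h
        apply h6
        have := (hsc _ _).1 h
        rwa [Fin.castSucc_castPred, Fin.castSucc_castPred] at this
    · intro x
      rcases eq_or_ne x (Fin.last m) with rfl | hx
      · constructor
        · rintro ⟨y, hy, hxy⟩
          rw [(hlast y).1 hy] at hxy
          exact absurd hxy (lt_irrefl _)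
        · intro _ y hy
          rw [(hlast y).1 hy, hπ]
      · have hxc : (x.castPred hx).castSucc = x := Fin.castSucc_castPred x hx
        have hπx : π x = (π' (x.castPred hx)).castSucc := by rw [hval, hxc]
        constructor
        · rintro ⟨y, hy, hxy⟩
          have hyn : y ≠ Fin.last m := hnl (by rw [hxc]; exact hy)
          have hyc : (y.castPred hyn).castSucc = y := Fin.castSucc_castPred y hyn
          have hc := (hCI (x.castPred hx)).1
            ⟨y.castPred hyn, (hsc _ _).2 (by rw [hxc, hyc]; exact hy),
              Fin.castSucc_lt_castSucc_iff.1 (by rw [hxc, hyc]; exact hxy)⟩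
          constructor
          · have h10 := Fin.castSucc_lt_castSucc_iff.2 hc.1
            rw [hxc] at h10
            rw [hπx]
            exact h10
          · intro z hz hxz
            have hzn : z ≠ Fin.last m := hnl (by rw [hxc]; exact hz)
            have hzc : (z.castPred hzn).castSucc = z := Fin.castSucc_castPred z hzn
            have h9 := hc.2 (z.castPred hzn) ((hsc _ _).2 (by rw [hxc, hzc]; exact hz))
              (Fin.castSucc_lt_castSucc_iff.1 (by rw [hxc, hzc]; exact hxz))
            have h10 := Fin.castSucc_le_castSucc_iff.2 h9
            rw [hzc] at h10
            rw [hπx]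
            exact h10
        · intro hall y hy
          have hall' : ∀ z, π'.SameCycle (x.castPred hx) z → z ≤ x.castPred hx := by
            intro z hz
            have := hall z.castSucc (by rw [← hxc]; exact (hsc _ _).1 hz)
            rw [← hxc] at this
            exact Fin.castSucc_le_castSucc_iff.1 this
          have hyn : y ≠ Fin.last m := hnl (by rw [hxc]; exact hy)
          have hyc : (y.castPred hyn).castSucc = y := Fin.castSucc_castPred y hyn
          have h9 := (hCI (x.castPred hx)).2 hall' (y.castPred hyn)
            ((hsc _ _).2 (by rw [hxc, hyc]; exact hy))
          have h10 := Fin.castSucc_le_castSucc_iff.2 h9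
          rw [hyc] at h10
          rw [hπx]
          exact h10

section CaseB

variable {m : ℕ}

lemma caseB_fix (π : Equiv.Perm (Fin (m+1))) :
    (π * Equiv.swap (π⁻¹ (Fin.last m)) (Fin.last m)) (Fin.last m) = Fin.last m := by
  rw [Equiv.Perm.mul_apply, Equiv.swap_apply_right, Equiv.Perm.apply_inv_self]

lemma caseB_apply_c (π : Equiv.Perm (Fin (m+1))) :
    (π * Equiv.swap (π⁻¹ (Fin.last m)) (Fin.last m)) (π⁻¹ (Fin.last m)) = π (Fin.last m) := by
  rw [Equiv.Perm.mul_apply, Equiv.swap_apply_left]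

lemma caseB_apply_other (π : Equiv.Perm (Fin (m+1))) {x : Fin (m+1)}
    (h1 : x ≠ π⁻¹ (Fin.last m)) (h2 : x ≠ Fin.last m) :
    (π * Equiv.swap (π⁻¹ (Fin.last m)) (Fin.last m)) x = π x := by
  rw [Equiv.Perm.mul_apply, Equiv.swap_apply_of_ne_of_ne h1 h2]

lemma caseB_pi_apply (π : Equiv.Perm (Fin (m+1))) (z : Fin (m+1)) :
    π z = (π * Equiv.swap (π⁻¹ (Fin.last m)) (Fin.last m))
      (Equiv.swap (π⁻¹ (Fin.last m)) (Fin.last m) z) := by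
  rw [Equiv.Perm.mul_apply, Equiv.swap_apply_self]

lemma caseB_rel (π : Equiv.Perm (Fin (m+1))) (hπt : π (Fin.last m) ≠ Fin.last m)
    (x y : Fin (m+1)) :
    π.SameCycle x y ↔
      ((π * Equiv.swap (π⁻¹ (Fin.last m)) (Fin.last m)).SameCycle x y ∨
       (x = Fin.last m ∧
         (π * Equiv.swap (π⁻¹ (Fin.last m)) (Fin.last m)).SameCycle (π (Fin.last m)) y) ∨
       ((π * Equiv.swap (π⁻¹ (Fin.last m)) (Fin.last m)).SameCycle x (π (Fin.last m)) ∧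
         y = Fin.last m)) := by
  set t := Fin.last m with ht
  set c := π⁻¹ t with hc
  set π₁ := π * Equiv.swap c t with hπ₁
  have hfix : π₁ t = t := caseB_fix π
  have hsw : π = Equiv.swap t (π t) * π₁ := by
    apply Equiv.ext
    intro z
    rw [swap_mul_apply']
    rcases eq_or_ne z c with rfl | hzc
    · rw [caseB_apply_c, Equiv.swap_apply_right]
      have : π c = t := π.apply_inv_self t
      rw [this]
    rcases eq_or_ne z t with rfl | hzt
    · rw [hfix, Equiv.swap_apply_left]
    · rw [caseB_apply_other π hzc hzt]
      have h1 : π z ≠ t := by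
        intro h
        exact hzc (by rw [hc, ← h, Equiv.Perm.inv_apply_self])
      have h2 : π z ≠ π t := fun h => hzt (π.injective h)
      rw [Equiv.swap_apply_of_ne_of_ne h1 h2]
  have hne : t ≠ π t := fun h => hπt h.symm
  have hnot : ¬ π₁.SameCycle t (π t) := by
    rw [sameCycle_fixed hfix]
    exact fun h => hπt h
  have hM := sameCycle_swap_mul_iff π₁ hne hnot x y
  rw [← hsw] at hM
  rw [hM]
  constructor
  · rintro (h | ⟨h1, h2⟩ | ⟨h1, h2⟩)
    · exact Or.inl h
    · exact Or.inr (Or.inl ⟨(sameCycle_fixed hfix).1 h1.symm, h2⟩)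
    · exact Or.inr (Or.inr ⟨h1, (sameCycle_fixed hfix).1 h2⟩)
  · rintro (h | ⟨h1, h2⟩ | ⟨h1, h2⟩)
    · exact Or.inl h
    · exact Or.inr (Or.inl ⟨by rw [h1], h2⟩)
    · exact Or.inr (Or.inr ⟨h1, by rw [h2]⟩)

lemma caseB_horb (π : Equiv.Perm (Fin (m+1))) (hπt : π (Fin.last m) ≠ Fin.last m)
    {x : Fin (m+1)} (hx : x ≠ Fin.last m) (y : Fin (m+1)) :
    (π * Equiv.swap (π⁻¹ (Fin.last m)) (Fin.last m)).SameCycle x y ↔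
      (π.SameCycle x y ∧ y ≠ Fin.last m) := by
  set π₁ := π * Equiv.swap (π⁻¹ (Fin.last m)) (Fin.last m) with hπ₁
  have hfix : π₁ (Fin.last m) = Fin.last m := caseB_fix π
  constructor
  · intro h
    refine ⟨(caseB_rel π hπt x y).2 (Or.inl h), ?_⟩
    intro hyt
    subst hyt
    exact hx ((sameCycle_fixed hfix).1 h.symm)
  · rintro ⟨h, hyt⟩
    rcases (caseB_rel π hπt x y).1 h with h' | ⟨h', _⟩ | ⟨_, h'⟩
    · exact h'
    · exact absurd h' hx
    · exact absurd h' hyt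

lemma caseB_sct (π : Equiv.Perm (Fin (m+1))) (hπt : π (Fin.last m) ≠ Fin.last m)
    (x : Fin (m+1)) :
    π.SameCycle x (Fin.last m) ↔
      (x = Fin.last m ∨
        (π * Equiv.swap (π⁻¹ (Fin.last m)) (Fin.last m)).SameCycle x (π (Fin.last m))) := by
  set π₁ := π * Equiv.swap (π⁻¹ (Fin.last m)) (Fin.last m) with hπ₁
  have hfix : π₁ (Fin.last m) = Fin.last m := caseB_fix π
  constructor
  · intro h
    rcases (caseB_rel π hπt x (Fin.last m)).1 h with h' | ⟨h', _⟩ | ⟨h', _⟩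
    · exact Or.inl ((sameCycle_fixed hfix).1 h'.symm)
    · exact Or.inl h'
    · exact Or.inr h'
  · rintro (rfl | h)
    · exact SameCycle.refl π (Fin.last m)
    · exact (caseB_rel π hπt x (Fin.last m)).2 (Or.inr (Or.inr ⟨h, rfl⟩))

end CaseB

/-- Case B forward : noncrossing is preserved when splitting off the top. -/
lemma caseB_NC_forward {m : ℕ} (π : Equiv.Perm (Fin (m+1)))
    (hπt : π (Fin.last m) ≠ Fin.last m) (hNCπ : IsNonCrossingPerm π) :
    IsNonCrossingPerm (π * Equiv.swap (π⁻¹ (Fin.last m)) (Fin.last m)) := by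
  obtain ⟨hNC, hCI⟩ := hNCπ
  set t := Fin.last m with ht
  set c := π⁻¹ t with hc
  set π₁ := π * Equiv.swap c t with hπ₁
  have hfix : π₁ t = t := caseB_fix π
  have hπ₁c : π₁ c = π t := caseB_apply_c π
  have hπct : π c = t := π.apply_inv_self t
  have hct : c ≠ t := by
    intro h
    rw [h] at hπct
    exact hπt hπct
  have hct' : π.SameCycle c t := sameCycle_of_apply_eq hπct
  obtain ⟨hmin, hgap⟩ := top_facts hCI
  constructor
  · rintro ⟨a₁, b₁, a₂, b₂, h1, h2, h3, h4, h5, h6⟩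
    have ha₁t : a₁ ≠ t := Fin.ne_of_lt (((h1.trans h2).trans h3).trans_le (Fin.le_last b₂))
    have hb₁t : b₁ ≠ t := Fin.ne_of_lt ((h2.trans h3).trans_le (Fin.le_last b₂))
    refine hNC ⟨a₁, b₁, a₂, b₂, h1, h2, h3,
      (caseB_rel π hπt a₁ a₂).2 (Or.inl h4),
      (caseB_rel π hπt b₁ b₂).2 (Or.inl h5), ?_⟩
    intro h
    rcases (caseB_rel π hπt a₁ b₁).1 h with h' | ⟨h', _⟩ | ⟨_, h'⟩
    · exact h6 h'
    · exact ha₁t h'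
    · exact hb₁t h'
  · intro x
    rcases eq_or_ne x t with rfl | hxt
    · constructor
      · rintro ⟨y, hy, hxy⟩
        rw [(sameCycle_fixed hfix).1 hy] at hxy
        exact absurd hxy (lt_irrefl _)
      · intro _ y hy
        rw [(sameCycle_fixed hfix).1 hy, hfix]
    rcases eq_or_ne x c with rfl | hxc
    · constructor
      · rintro ⟨y, hy, hxy⟩
        exfalso
        have hyt : y ≠ t := by
          intro h
          subst h
          exact hct ((sameCycle_fixed hfix).1 hy.symm)
        have hyπ : π.SameCycle c y := (caseB_rel π hπt c y).2 (Or.inl hy)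
        exact hgap y hyπ ⟨hxy, fin_lt_last_of_ne hyt⟩
      · intro _ y hy
        rw [hπ₁c]
        have h9 : π.SameCycle c y := (caseB_rel π hπt c y).2 (Or.inl hy)
        exact hmin y (hct'.symm.trans h9)
    · have hx : π₁ x = π x := caseB_apply_other π hxc hxt
      by_cases hxC : π.SameCycle x t
      · constructor
        · rintro ⟨y, hy, hxy⟩
          obtain ⟨hlt', hbound⟩ := (hCI x).1
            ⟨y, (caseB_rel π hπt x y).2 (Or.inl hy), hxy⟩
          refine ⟨by rw [hx]; exact hlt', ?_⟩
          intro z hz hxz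
          rw [hx]
          exact hbound z ((caseB_rel π hπt x z).2 (Or.inl hz)) hxz
        · intro hall y hy
          exfalso
          have hcx : π₁.SameCycle x c :=
            (caseB_horb π hπt hxt c).2 ⟨hxC.trans hct'.symm, hct⟩
          have hcleq := hall c hcx
          have hgx := hgap x (hxC.trans hct'.symm).symm
          have hxlt : x < t := fin_lt_last_of_ne hxt
          have hncx : ¬ c < x := fun h => hgx ⟨h, hxlt⟩
          exact hxc (le_antisymm (not_lt.1 hncx) hcleq)
      · have horbx : ∀ y, π₁.SameCycle x y ↔ π.SameCycle x y := by
          intro y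
          constructor
          · exact fun h => (caseB_rel π hπt x y).2 (Or.inl h)
          · intro h
            rcases (caseB_rel π hπt x y).1 h with h' | ⟨h', _⟩ | ⟨_, h''⟩
            · exact h'
            · exact absurd h' hxt
            · refine absurd ?_ hxC
              rw [ht, ← h'']
              exact h
        constructor
        · rintro ⟨y, hy, hxy⟩
          obtain ⟨hlt', hbound⟩ := (hCI x).1 ⟨y, (horbx y).1 hy, hxy⟩
          exact ⟨by rw [hx]; exact hlt',
            fun z hz hxz => by rw [hx]; exact hbound z ((horbx z).1 hz) hxz⟩
        · intro hall y hy
          rw [hx]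
          exact (hCI x).2 (fun z hz => hall z ((horbx z).2 hz)) y ((horbx y).1 hy)

/-- Case B backward : reinserting the top element preserves noncrossing, given that
no cycle of the split permutation straddles `c`. -/
lemma caseB_NC_backward {m : ℕ} (π : Equiv.Perm (Fin (m+1)))
    (hπt : π (Fin.last m) ≠ Fin.last m)
    (hNC₁ : IsNonCrossingPerm (π * Equiv.swap (π⁻¹ (Fin.last m)) (Fin.last m)))
    (hP : ∀ a b, (π * Equiv.swap (π⁻¹ (Fin.last m)) (Fin.last m)).SameCycle a b →
      a ≤ π⁻¹ (Fin.last m) → b ≤ π⁻¹ (Fin.last m)) :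
    IsNonCrossingPerm π := by
  obtain ⟨hNC₁', hCI₁⟩ := hNC₁
  set t := Fin.last m with ht
  set c := π⁻¹ t with hc
  set π₁ := π * Equiv.swap c t with hπ₁
  have hfix : π₁ t = t := caseB_fix π
  have hπ₁c : π₁ c = π t := caseB_apply_c π
  have hπct : π c = t := π.apply_inv_self t
  have hct : c ≠ t := by
    intro h
    rw [h] at hπct
    exact hπt hπct
  have hclt : c < t := fin_lt_last_of_ne hct
  have hcπt : π₁.SameCycle c (π t) := sameCycle_of_apply_eq hπ₁c
  have hP' : ∀ b, π₁.SameCycle c b → b ≤ c := fun b h => hP c b h (le_refl c)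
  have hvt : π t = π₁ c := hπ₁c.symm
  constructor
  · rintro ⟨a₁, b₁, a₂, b₂, h1, h2, h3, h4, h5, h6⟩
    have ha₁t : a₁ ≠ t := Fin.ne_of_lt (((h1.trans h2).trans h3).trans_le (Fin.le_last b₂))
    have hb₁t : b₁ ≠ t := Fin.ne_of_lt ((h2.trans h3).trans_le (Fin.le_last b₂))
    have ha₂t : a₂ ≠ t := Fin.ne_of_lt (h3.trans_le (Fin.le_last b₂))
    have hna : ¬ π₁.SameCycle a₁ b₁ := fun h => h6 ((caseB_rel π hπt a₁ b₁).2 (Or.inl h))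
    rcases eq_or_ne b₂ t with rfl | hb₂t
    · have hb₁c : π₁.SameCycle b₁ c := by
        rcases (caseB_sct π hπt b₁).1 h5 with h' | h'
        · exact absurd h' hb₁t
        · exact h'.trans hcπt.symm
      have hb₁le : b₁ ≤ c := hP c b₁ hb₁c.symm (le_refl c)
      have ha₁₂ : π₁.SameCycle a₁ a₂ := (caseB_horb π hπt ha₁t a₂).2 ⟨h4, ha₂t⟩
      have ha₁le : a₁ ≤ c := le_of_lt (lt_of_lt_of_le h1 hb₁le)
      have ha₂le : a₂ ≤ c := hP a₁ a₂ ha₁₂ ha₁le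
      rcases lt_or_eq_of_le ha₂le with hlt | heq
      · exact hNC₁' ⟨a₁, b₁, a₂, c, h1, h2, hlt, ha₁₂, hb₁c, hna⟩
      · subst heq
        exact hna (ha₁₂.trans hb₁c.symm)
    · exact hNC₁' ⟨a₁, b₁, a₂, b₂, h1, h2, h3,
        (caseB_horb π hπt ha₁t a₂).2 ⟨h4, ha₂t⟩,
        (caseB_horb π hπt hb₁t b₂).2 ⟨h5, hb₂t⟩, hna⟩
  · intro x
    rcases eq_or_ne x t with rfl | hxt
    · constructor
      · rintro ⟨y, hy, hxy⟩
        exact absurd hxy (not_lt.2 (Fin.le_last y))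
      · intro _ y hy
        rw [hvt]
        rcases (caseB_sct π hπt y).1 hy.symm with hyt | hy₁
        · rw [hyt]
          exact Fin.le_last _
        · exact (hCI₁ c).2 hP' y (hy₁.trans hcπt.symm).symm
    rcases eq_or_ne x c with rfl | hxc
    · constructor
      · intro _
        refine ⟨by rw [hπct]; exact hclt, ?_⟩
        intro y hy hcy
        have h9 : π.SameCycle y t := hy.symm.trans (sameCycle_of_apply_eq hπct)
        rcases (caseB_sct π hπt y).1 h9 with hyt | hy₁
        · rw [hπct, hyt]
        · exact absurd (hP' y (hy₁.trans hcπt.symm).symm) (not_le.2 hcy)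
      · intro hall y hy
        exfalso
        exact absurd (hall t (sameCycle_of_apply_eq hπct)) (not_le.2 hclt)
    · have hvx : π x = π₁ x := by
        have := caseB_pi_apply π x
        rwa [Equiv.swap_apply_of_ne_of_ne hxc hxt] at this
      by_cases hxc₁ : π₁.SameCycle x c
      · have hxlec : x ≤ c := hP c x hxc₁.symm (le_refl c)
        have hxltc : x < c := lt_of_le_of_ne hxlec hxc
        constructor
        · intro _
          obtain ⟨hlt', hbound⟩ := (hCI₁ x).1 ⟨c, hxc₁, hxltc⟩
          refine ⟨by rw [hvx]; exact hlt', ?_⟩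
          intro y hy hxy
          rw [hvx]
          rcases (caseB_rel π hπt x y).1 hy with h' | ⟨h', _⟩ | ⟨_, h''⟩
          · exact hbound y h' hxy
          · exact absurd h' hxt
          · rw [h'']
            exact Fin.le_last _
        · intro hall _ _
          exfalso
          have hxt' : π.SameCycle x t := (caseB_sct π hπt x).2 (Or.inr (hxc₁.trans hcπt))
          exact absurd (hall t hxt') (not_le.2 (fin_lt_last_of_ne hxt))
      · have horbx : ∀ y, π.SameCycle x y ↔ π₁.SameCycle x y := by
          intro y
          constructor
          · intro h
            rcases (caseB_rel π hπt x y).1 h with h' | ⟨h', _⟩ | ⟨h', _⟩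
            · exact h'
            · exact absurd h' hxt
            · exact absurd (h'.trans hcπt.symm) hxc₁
          · exact fun h => (caseB_rel π hπt x y).2 (Or.inl h)
        constructor
        · rintro ⟨y, hy, hxy⟩
          obtain ⟨hlt', hbound⟩ := (hCI₁ x).1 ⟨y, (horbx y).1 hy, hxy⟩
          exact ⟨by rw [hvx]; exact hlt',
            fun z hz hxz => by rw [hvx]; exact hbound z ((horbx z).1 hz) hxz⟩
        · intro hall y hy
          rw [hvx]
          exact (hCI₁ x).2 (fun z hz => hall z ((horbx z).2 hz)) y ((horbx y).1 hy)

/-- Case B : if `c` and `t` are in different cycles of `σ`, then no cycle of the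
split permutation straddles `c`. -/
lemma caseB_P_of_not_sameCycle {m : ℕ} (π : Equiv.Perm (Fin (m+1)))
    (hπt : π (Fin.last m) ≠ Fin.last m)
    (hNC₁ : IsNonCrossingPerm (π * Equiv.swap (π⁻¹ (Fin.last m)) (Fin.last m)))
    (hσ : ¬ (π⁻¹ * finRotate (m+1)).SameCycle (π⁻¹ (Fin.last m)) (Fin.last m)) :
    ∀ a b, (π * Equiv.swap (π⁻¹ (Fin.last m)) (Fin.last m)).SameCycle a b →
      a ≤ π⁻¹ (Fin.last m) → b ≤ π⁻¹ (Fin.last m) := by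
  classical
  set t := Fin.last m with ht
  set c := π⁻¹ t with hc
  set π₁ := π * Equiv.swap c t with hπ₁
  have hfix : π₁ t = t := caseB_fix π
  have hπct : π c = t := π.apply_inv_self t
  have hct : c ≠ t := by
    intro h
    rw [h] at hπct
    exact hπt hπct
  by_contra hcon
  push_neg at hcon
  obtain ⟨a, b, hab, hac, hbc⟩ := hcon
  have hbc' : c < b := hbc
  set D := orb π₁ a with hD
  have haD : a ∈ D := self_mem_orb π₁ a
  have hbD : b ∈ D := mem_orb.2 hab
  set Da := D.filter (fun z => z ≤ c) with hDa
  set Db := D.filter (fun z => c < z) with hDb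
  have hDa_ne : Da.Nonempty := ⟨a, Finset.mem_filter.2 ⟨haD, hac⟩⟩
  have hDb_ne : Db.Nonempty := ⟨b, Finset.mem_filter.2 ⟨hbD, hbc'⟩⟩
  set a₀ := Da.max' hDa_ne with ha₀
  set b₀ := Db.min' hDb_ne with hb₀
  have ha₀mem := Da.max'_mem hDa_ne
  have hb₀mem := Db.min'_mem hDb_ne
  rw [Finset.mem_filter] at ha₀mem hb₀mem
  have ha₀c : a₀ ≤ c := ha₀mem.2
  have hcb₀ : c < b₀ := hb₀mem.2
  have hab' : a₀ < b₀ := lt_of_le_of_lt ha₀c hcb₀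
  have ha₀a : π₁.SameCycle a a₀ := mem_orb.1 ha₀mem.1
  have hb₀a : π₁.SameCycle a b₀ := mem_orb.1 hb₀mem.1
  have hsc : π₁.SameCycle a₀ b₀ := ha₀a.symm.trans hb₀a
  have hgap : ∀ z, π₁.SameCycle a₀ z → ¬(a₀ < z ∧ z < b₀) := by
    rintro z hz ⟨hz1, hz2⟩
    have hzD : z ∈ D := mem_orb.2 (ha₀a.trans hz)
    rcases le_or_gt z c with hzc | hzc
    · have : z ∈ Da := Finset.mem_filter.2 ⟨hzD, hzc⟩
      exact absurd hz1 (not_lt.2 (Da.le_max' z this))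
    · have : z ∈ Db := Finset.mem_filter.2 ⟨hzD, hzc⟩
      exact absurd hz2 (not_lt.2 (Db.min'_le z this))
  have hinv := sigma_invariant hNC₁.1 hNC₁.2 hab' hsc hgap
  set S : Finset (Fin (m+1)) := univ.filter (fun x => a₀ ≤ x ∧ x < b₀) with hS
  have hnsc : ¬ (π₁⁻¹ * finRotate (m+1)).SameCycle c t := by
    apply not_sameCycle_of_invariant _ S
    · intro x hx
      rw [Finset.mem_filter] at hx
      obtain ⟨h1', h2'⟩ := hinv x hx.2.1 hx.2.2
      exact Finset.mem_filter.2 ⟨Finset.mem_univ _, h1', h2'⟩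
    · exact Finset.mem_filter.2 ⟨Finset.mem_univ _, ha₀c, hcb₀⟩
    · intro hcont
      rw [Finset.mem_filter] at hcont
      exact absurd hcont.2.2 (not_lt.2 (Fin.le_last b₀))
  have hσ₁ : π₁⁻¹ * finRotate (m+1) = Equiv.swap c t * (π⁻¹ * finRotate (m+1)) := by
    rw [hπ₁, mul_inv_rev, Equiv.swap_inv, mul_assoc]
  have hback : π⁻¹ * finRotate (m+1)
      = Equiv.swap c t * (π₁⁻¹ * finRotate (m+1)) := by
    rw [hσ₁, ← mul_assoc, Equiv.swap_mul_self, one_mul]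
  have := sameCycle_swap_mul_self (π₁⁻¹ * finRotate (m+1)) hct hnsc
  rw [← hback] at this
  exact hσ this

/-- Case B : when `π` is noncrossing, `c` and `t` lie in different cycles of `σ`. -/
lemma caseB_not_sameCycle_of_NC {m : ℕ} (π : Equiv.Perm (Fin (m+1)))
    (hπt : π (Fin.last m) ≠ Fin.last m) (hNCπ : IsNonCrossingPerm π) :
    ¬ (π⁻¹ * finRotate (m+1)).SameCycle (π⁻¹ (Fin.last m)) (Fin.last m) := by
  classical
  obtain ⟨hNC, hCI⟩ := hNCπ
  have hπct : π (π⁻¹ (Fin.last m)) = Fin.last m := π.apply_inv_self _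
  have hct : π⁻¹ (Fin.last m) ≠ Fin.last m := by
    intro h
    rw [h] at hπct
    exact hπt hπct
  have hclt : π⁻¹ (Fin.last m) < Fin.last m := fin_lt_last_of_ne hct
  obtain ⟨hmin, hgap⟩ := top_facts hCI
  have hinv := sigma_invariant hNC hCI hclt (sameCycle_of_apply_eq hπct)
    (fun z hz hcon => hgap z hz hcon)
  set S : Finset (Fin (m+1)) :=
    univ.filter (fun x => π⁻¹ (Fin.last m) ≤ x ∧ x < Fin.last m) with hS
  apply not_sameCycle_of_invariant _ S
  · intro x hx
    rw [Finset.mem_filter] at hx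
    obtain ⟨h1', h2'⟩ := hinv x hx.2.1 hx.2.2
    exact Finset.mem_filter.2 ⟨Finset.mem_univ _, h1', h2'⟩
  · exact Finset.mem_filter.2 ⟨Finset.mem_univ _, le_refl _, hclt⟩
  · intro hcont
    rw [Finset.mem_filter] at hcont
    exact absurd hcont.2.2 (lt_irrefl _)

lemma cycleCount_eq_orbCount' {k : ℕ} (f : Equiv.Perm (Fin k)) :
    cycleCount f = orbCount f :=
  cycleCount_eq_orbCount f

lemma main_aux : ∀ n : ℕ, 1 ≤ n → ∀ π : Equiv.Perm (Fin n),
    cycleCount π + cycleCount (π⁻¹ * finRotate n) ≤ n + 1 ∧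
    (cycleCount π + cycleCount (π⁻¹ * finRotate n) = n + 1 ↔ IsNonCrossingPerm π) := by
  intro n
  induction n with
  | zero => intro h; exact absurd h (by norm_num)
  | succ m ih =>
    intro _ π
    rw [cycleCount_eq_orbCount' π, cycleCount_eq_orbCount' (π⁻¹ * finRotate (m+1))]
    rcases Nat.eq_zero_or_pos m with rfl | hm
    · -- base case n = 1
      have huniq : ∀ f : Equiv.Perm (Fin 1), f = 1 :=
        fun f => Equiv.ext fun x => Subsingleton.elim _ _
      have hone : ∀ f : Equiv.Perm (Fin 1), orbCount f = 1 := by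
        intro f
        rw [← cycleCount_eq_orbCount' f, huniq f]
        unfold cycleCount
        rw [Equiv.Perm.cycleType_one]
        simp
      have hNC : IsNonCrossingPerm π := by
        constructor
        · rintro ⟨a₁, b₁, a₂, b₂, h1, -, -, -, -, -⟩
          rw [Fin.lt_def] at h1
          have := a₁.isLt
          have := b₁.isLt
          omega
        · intro x
          constructor
          · rintro ⟨y, -, hxy⟩
            exfalso
            rw [Fin.lt_def] at hxy
            have := x.isLt
            have := y.isLt
            omega
          · intro _ y _
            have h8 := (π x).isLt
            have h9 := y.isLt
            rw [Fin.le_def]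
            omega
      rw [hone π, hone (π⁻¹ * finRotate 1)]
      exact ⟨le_refl _, by simp [hNC]⟩
    · obtain ⟨l, rfl⟩ : ∃ l, m = l + 1 := ⟨m - 1, by omega⟩
      have IH := ih (by omega)
      by_cases hπt : π (Fin.last (l+1)) = Fin.last (l+1)
      · -- Case A
        have hkey := caseA_key π hπt
        have hNCiff := caseA_NC π hπt
        obtain ⟨hle, hiff⟩ := IH (resPerm π hπt)
        rw [cycleCount_eq_orbCount' (resPerm π hπt),
          cycleCount_eq_orbCount' ((resPerm π hπt)⁻¹ * finRotate (l+1))] at hle hiff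
        have hbr : orbCount (π⁻¹ * finRotate (l+1+1)) = orbCount (π⁻¹ * finRotate (l+2)) :=
          rfl
        constructor
        · omega
        · constructor
          · intro hsum
            exact hNCiff.2 (hiff.1 (by omega))
          · intro hNCπ
            have := hiff.2 (hNCiff.1 hNCπ)
            omega
      · -- Case B
        have hπct : π (π⁻¹ (Fin.last (l+1))) = Fin.last (l+1) := π.apply_inv_self _
        have hct : π⁻¹ (Fin.last (l+1)) ≠ Fin.last (l+1) := by
          intro h
          rw [h] at hπct
          exact hπt hπct
        have hfix := caseB_fix π (m := l+1)
        have h1 : orbCount (π * Equiv.swap (π⁻¹ (Fin.last (l+1))) (Fin.last (l+1)))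
            = orbCount π + 1 :=
          orbCount_mul_swap_split π hct (sameCycle_of_apply_eq hπct)
        have hkey := caseA_key _ hfix
        have hNCiff := caseA_NC _ hfix
        obtain ⟨hle, hiff⟩ := IH (resPerm _ hfix)
        rw [cycleCount_eq_orbCount' (resPerm _ hfix),
          cycleCount_eq_orbCount' ((resPerm _ hfix)⁻¹ * finRotate (l+1))] at hle hiff
        have hbr : orbCount (π⁻¹ * finRotate (l+1+1)) = orbCount (π⁻¹ * finRotate (l+2)) :=
          rfl
        have hσ₁eq : (π * Equiv.swap (π⁻¹ (Fin.last (l+1))) (Fin.last (l+1)))⁻¹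
              * finRotate (l+2)
            = Equiv.swap (π⁻¹ (Fin.last (l+1))) (Fin.last (l+1))
              * (π⁻¹ * finRotate (l+2)) := by
          rw [mul_inv_rev, Equiv.swap_inv, mul_assoc]
        by_cases hσct : (π⁻¹ * finRotate (l+2)).SameCycle
            (π⁻¹ (Fin.last (l+1))) (Fin.last (l+1))
        · have h2 : orbCount ((π * Equiv.swap (π⁻¹ (Fin.last (l+1))) (Fin.last (l+1)))⁻¹
              * finRotate (l+2)) = orbCount (π⁻¹ * finRotate (l+2)) + 1 := by
            rw [hσ₁eq]
            exact orbCount_split _ hct hσct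
          constructor
          · omega
          · constructor
            · intro hsum
              omega
            · intro hNCπ
              exact absurd hσct (caseB_not_sameCycle_of_NC π hπt hNCπ)
        · have h2 : orbCount ((π * Equiv.swap (π⁻¹ (Fin.last (l+1))) (Fin.last (l+1)))⁻¹
              * finRotate (l+2)) + 1 = orbCount (π⁻¹ * finRotate (l+2)) := by
            rw [hσ₁eq]
            exact orbCount_merge _ hct hσct
          constructor
          · omega
          · constructor
            · intro hsum
              have hNC₁ : IsNonCrossingPerm
                  (π * Equiv.swap (π⁻¹ (Fin.last (l+1))) (Fin.last (l+1))) :=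
                hNCiff.2 (hiff.1 (by omega))
              exact caseB_NC_backward π hπt hNC₁
                (caseB_P_of_not_sameCycle π hπt hNC₁ hσct)
            · intro hNCπ
              have hNC₁ := caseB_NC_forward π hπt hNCπ
              have := hiff.2 (hNCiff.1 hNC₁)
              omega

-- MORE LEMMAS HERE

end Main

/-- Among all `π ∈ S_n` (`n ≥ 1`), the quantity `|π| + |π⁻¹ ∘ τ|` is at most `n + 1`,
where `τ = (1 2 … n)`, and the maximum value `n + 1` is attained exactly by the
non-crossing permutations. -/
theorem cycleCount_add_cycleCount_le_and_eq_iff_noncrossing {n : ℕ} (hn : 1 ≤ n)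
    (π : Equiv.Perm (Fin n)) :
    cycleCount π + cycleCount (π⁻¹ * finRotate n) ≤ n + 1 ∧
    (cycleCount π + cycleCount (π⁻¹ * finRotate n) = n + 1 ↔ IsNonCrossingPerm π) :=
  main_aux n hn π
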